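/- Let C : [0,∞) → 𝒫(ℝ) be admissible with {(x,h) : x ∈ C(h)} Lebesgue-measurable, each C(h) of finite measure, and ρ[C] finite almost everywhere. Let C̃ : [0,∞) → 𝒫(ℝ) be another family with {(x,h) : x ∈ C̃(h)} Lebesgue-measurable, ρ[C̃] finite almost everywhere, and |C̃(h)| = |C(h)| for every h ≥ 0. Let Φ : [0,∞) → ℝ be differentiable and convex with Φ(0) = 0 and Φ' ≥ 0, and assume h ↦ Φ'(h)·|C(h)| is integrable on (0,∞). Then ∫_ℝ Φ(ρ[C̃](x)) dx ≤ ∫_ℝ Φ(ρ[C](x)) dx. In particular, any rearrangement of the level sets of a density that preserves the measure of each level set does not increase the internal energy. -/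

import Mathlib

/-!
Since `Φ` is convex, `Φ'` is nondecreasing and `Φ(t) = ∫₀ᵗ Φ'`. For a family `D`, integrating
`∫_{S_x} Φ'` over `x`, where `S_x = {h ≥ 0 : x ∈ D(h)}`, gives `∫₀^∞ Φ'(h) |D(h)| dh` by Tonelli,
and `|S_x| = ρ[D](x)`. For the admissible family `C`, `S_x` is the interval `[0, ρ[C](x))` up to
a null set, so `Φ(ρ[C](x)) = ∫_{S_x} Φ'`. For an arbitrary family, `∫₀^{|S|} Φ' ≤ ∫_S Φ'` because
`Φ'` is nondecreasing (bathtub principle), so `Φ(ρ[C̃](x)) ≤ ∫_{S_x} Φ'`. As `|C̃(h)| = |C(h)|`,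
the two Tonelli integrals agree.
-/

open MeasureTheory Set

open scoped ENNReal

theorem ConvexOn.monotoneOn_of_hasDerivWithinAt {S : Set ℝ} {f f' : ℝ → ℝ}
    (hfc : ConvexOn ℝ S f) (hf : ∀ x ∈ S, HasDerivWithinAt f (f' x) S x) :
    MonotoneOn f' S := by
  intro x hx y hy hxy
  rcases eq_or_lt_of_le hxy with rfl | hxy
  · rfl
  exact (hfc.le_slope_of_hasDerivWithinAt hx hy hxy (hf x hx)).trans
    (hfc.slope_le_of_hasDerivWithinAt hx hy hxy (hf y hy))

theorem ofReal_sub_eq_setLIntegral_Icc_of_hasDerivWithinAt {f f' : ℝ → ℝ} {a b : ℝ}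
    (hab : a ≤ b) (hf : ∀ x ∈ Icc a b, HasDerivWithinAt f (f' x) (Icc a b) x)
    (hf' : IntegrableOn f' (Icc a b)) (hf'_nonneg : ∀ x ∈ Icc a b, 0 ≤ f' x) :
    ENNReal.ofReal (f b - f a) = ∫⁻ x in Icc a b, ENNReal.ofReal (f' x) := by
  have hFTC : ∫ x in a..b, f' x = f b - f a :=
    intervalIntegral.integral_eq_sub_of_hasDerivAt_of_le hab
      (fun x hx => (hf x hx).continuousWithinAt)
      (fun x hx => (hf x (Ioo_subset_Icc_self hx)).hasDerivAt (Icc_mem_nhds hx.1 hx.2))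
      ((intervalIntegrable_iff_integrableOn_Icc_of_le hab).2 hf')
  rw [← hFTC, intervalIntegral.integral_of_le hab, ← integral_Icc_eq_integral_Ioc,
    ofReal_integral_eq_lintegral_ofReal hf' ((ae_restrict_iff' measurableSet_Icc).2
      (ae_of_all _ hf'_nonneg))]

/-- Bathtub principle: the part of `[0, |S|]` missing from `S` has the same measure as the part
of `S` beyond `|S|`, where the weight is larger. -/
theorem MonotoneOn.setLIntegral_Icc_volume_le {F : ℝ → ℝ≥0∞} (hF : MonotoneOn F (Ici 0))
    {S : Set ℝ} (hS : MeasurableSet S) (hS0 : S ⊆ Ici 0) :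
    ∫⁻ h in Icc 0 (volume S).toReal, F h ≤ ∫⁻ h in S, F h := by
  rcases eq_or_ne (volume S) ⊤ with hS_top | hS_fin
  · simp [hS_top]
  set t := (volume S).toReal
  have ht : 0 ≤ t := ENNReal.toReal_nonneg
  have hsdiff : volume (Icc 0 t \ S) = volume (S \ Icc 0 t) :=
    measure_sdiff_symm measurableSet_Icc.nullMeasurableSet hS.nullMeasurableSet
      (by rw [Real.volume_Icc, sub_zero, ENNReal.ofReal_toReal hS_fin])
      (measure_ne_top_of_subset inter_subset_right hS_fin)
  calc ∫⁻ h in Icc 0 t, F h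
      = (∫⁻ h in Icc 0 t ∩ S, F h) + ∫⁻ h in Icc 0 t \ S, F h :=
        (lintegral_inter_add_sdiff F _ hS).symm
    _ ≤ (∫⁻ h in S ∩ Icc 0 t, F h) + ∫⁻ _ in Icc 0 t \ S, F t := by
        rw [inter_comm]
        exact add_le_add le_rfl <| setLIntegral_mono' (measurableSet_Icc.diff hS)
          fun h hh => hF hh.1.1 ht hh.1.2
    _ = (∫⁻ h in S ∩ Icc 0 t, F h) + ∫⁻ _ in S \ Icc 0 t, F t := by
        rw [setLIntegral_const, setLIntegral_const, hsdiff]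
    _ ≤ (∫⁻ h in S ∩ Icc 0 t, F h) + ∫⁻ h in S \ Icc 0 t, F h := by
        refine add_le_add le_rfl <| setLIntegral_mono' (hS.diff measurableSet_Icc)
          fun h hh => hF ht (hS0 hh.1) ?_
        by_contra hlt
        exact hh.2 ⟨hS0 hh.1, (not_le.1 hlt).le⟩
    _ = ∫⁻ h in S, F h := lintegral_inter_add_sdiff F _ measurableSet_Icc

theorem ae_eq_Icc_toReal_volume_of_Icc_subset {S : Set ℝ} (hS0 : S ⊆ Ici 0)
    (hS : ∀ h ∈ S, Icc 0 h ⊆ S) (hS_fin : volume S ≠ ⊤) :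
    S =ᵐ[volume] Icc 0 (volume S).toReal := by
  set t := (volume S).toReal
  have h_subset_Icc : S ⊆ Icc 0 t := by
    intro h hh
    have := measure_mono (μ := volume) (hS h hh)
    rw [Real.volume_Icc, sub_zero] at this
    exact ⟨hS0 hh, (ENNReal.ofReal_le_iff_le_toReal hS_fin).1 this⟩
  have h_Ico_subset : Ico 0 t ⊆ S := by
    intro h hh
    by_contra hns
    have hS_Ico : S ⊆ Ico 0 h := fun h' hh' =>
      ⟨hS0 hh', not_le.1 fun hle => hns (hS h' hh' ⟨hh.1, hle⟩)⟩
    have := measure_mono (μ := volume) hS_Ico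
    rw [Real.volume_Ico, sub_zero] at this
    exact (not_le.2 hh.2) (ENNReal.toReal_le_of_le_ofReal hh.1 this)
  exact h_subset_Icc.eventuallyLE.antisymm (Ico_ae_eq_Icc.symm.le.trans h_Ico_subset.eventuallyLE)

theorem lintegral_setLIntegral_section_eq {D : ℝ → Set ℝ}
    (hD : MeasurableSet {p : ℝ × ℝ | 0 ≤ p.2 ∧ p.1 ∈ D p.2}) {F : ℝ → ℝ≥0∞} (hF : Measurable F) :
    ∫⁻ x, ∫⁻ h in {h | 0 ≤ h ∧ x ∈ D h}, F h = ∫⁻ h in Ici 0, F h * volume (D h) := by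
  set A := {p : ℝ × ℝ | 0 ≤ p.2 ∧ p.1 ∈ D p.2}
  have hFA : Measurable (A.indicator fun p => F p.2) := (hF.comp measurable_snd).indicator hD
  calc ∫⁻ x, ∫⁻ h in {h | 0 ≤ h ∧ x ∈ D h}, F h
      = ∫⁻ x, ∫⁻ h, A.indicator (fun p => F p.2) (x, h) := by
        refine lintegral_congr fun x => ?_
        have hs : MeasurableSet {h | 0 ≤ h ∧ x ∈ D h} := hD.preimage measurable_prodMk_left
        rw [← lintegral_indicator hs]
        rfl
    _ = ∫⁻ h, ∫⁻ x, A.indicator (fun p => F p.2) (x, h) :=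
        lintegral_lintegral_swap hFA.aemeasurable
    _ = ∫⁻ h, F h * volume {x | (x, h) ∈ A} := by
        refine lintegral_congr fun h => ?_
        have hs : MeasurableSet {x | (x, h) ∈ A} := hD.preimage measurable_prodMk_right
        rw [← lintegral_indicator_const hs]
        rfl
    _ = ∫⁻ h, (Ici 0).indicator (fun h => F h * volume (D h)) h := by
        refine lintegral_congr fun h => ?_
        by_cases hh : 0 ≤ h <;> simp [A, hh]
    _ = ∫⁻ h in Ici 0, F h * volume (D h) := lintegral_indicator measurableSet_Ici _

theorem lintegral_setLIntegral_Icc_volume_section_le {D : ℝ → Set ℝ}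
    (hD : MeasurableSet {p : ℝ × ℝ | 0 ≤ p.2 ∧ p.1 ∈ D p.2}) {F : ℝ → ℝ≥0∞} (hF : Monotone F) :
    ∫⁻ x, ∫⁻ h in Icc 0 (volume {h | 0 ≤ h ∧ x ∈ D h}).toReal, F h ≤
      ∫⁻ h in Ici 0, F h * volume (D h) :=
  (lintegral_mono fun _ => hF.monotoneOn _ |>.setLIntegral_Icc_volume_le
    (hD.preimage measurable_prodMk_left) fun _ hh => hh.1).trans_eq
    (lintegral_setLIntegral_section_eq hD hF.measurable)

theorem lintegral_setLIntegral_Icc_volume_section_eq {D : ℝ → Set ℝ}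
    (hD_anti : ∀ h₁ h₂ : ℝ, 0 ≤ h₁ → h₁ ≤ h₂ → D h₂ ⊆ D h₁)
    (hD : MeasurableSet {p : ℝ × ℝ | 0 ≤ p.2 ∧ p.1 ∈ D p.2})
    (hD_fin : ∀ᵐ x : ℝ, volume {h : ℝ | 0 ≤ h ∧ x ∈ D h} ≠ ⊤) {F : ℝ → ℝ≥0∞} (hF : Measurable F) :
    ∫⁻ x, ∫⁻ h in Icc 0 (volume {h | 0 ≤ h ∧ x ∈ D h}).toReal, F h =
      ∫⁻ h in Ici 0, F h * volume (D h) := by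
  rw [← lintegral_setLIntegral_section_eq hD hF]
  refine lintegral_congr_ae ?_
  filter_upwards [hD_fin] with x hx
  refine setLIntegral_congr (ae_eq_Icc_toReal_volume_of_Icc_subset (fun _ hh => hh.1) ?_ hx).symm
  exact fun h hh h' hh' => ⟨hh'.1, hD_anti h' h hh'.1 hh'.2 hh.2⟩

theorem integral_comp_eq_toReal_lintegral {α : Type*} [MeasurableSpace α] {μ : Measure α}
    {Φ : ℝ → ℝ} {G : ℝ → ℝ≥0∞} (hΦ_cont : ContinuousOn Φ (Ici 0))
    (hΦ_nonneg : ∀ t ∈ Ici (0 : ℝ), 0 ≤ Φ t) (hΦG : ∀ t ∈ Ici (0 : ℝ), ENNReal.ofReal (Φ t) = G t)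
    {ρ : α → ℝ} (hρ : Measurable ρ) (hρ_nonneg : ∀ x, 0 ≤ ρ x) :
    ∫ x, Φ (ρ x) ∂μ = (∫⁻ x, G (ρ x) ∂μ).toReal := by
  have hΦρ : Measurable fun x => Φ (max (ρ x) 0) :=
    (hΦ_cont.comp_continuous (continuous_id.max continuous_const)
      fun t => le_max_right t 0).measurable.comp hρ
  simp only [max_eq_left (hρ_nonneg _)] at hΦρ
  rw [integral_eq_lintegral_of_nonneg_ae (ae_of_all _ fun x => hΦ_nonneg _ (hρ_nonneg x))
    hΦρ.aestronglyMeasurable]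
  exact congrArg _ (lintegral_congr fun x => hΦG _ (hρ_nonneg x))

theorem stmt_7_general (C Ct : ℝ → Set ℝ)
    (hadm : ∀ h₁ h₂ : ℝ, 0 ≤ h₁ → h₁ ≤ h₂ → C h₂ ⊆ C h₁)
    (hmeas : MeasurableSet {p : ℝ × ℝ | 0 ≤ p.2 ∧ p.1 ∈ C p.2})
    (hfin : ∀ h : ℝ, volume (C h) < ⊤)
    (hρfin : ∀ᵐ x : ℝ, volume {h : ℝ | 0 ≤ h ∧ x ∈ C h} ≠ ⊤)
    (hmeas' : MeasurableSet {p : ℝ × ℝ | 0 ≤ p.2 ∧ p.1 ∈ Ct p.2})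
    (hsame : ∀ h : ℝ, 0 ≤ h → volume (Ct h) = volume (C h))
    (Φ Φ' : ℝ → ℝ)
    (hΦdiff : ∀ x ∈ Ici (0:ℝ), HasDerivWithinAt Φ (Φ' x) (Ici 0) x)
    (hΦconv : ConvexOn ℝ (Ici 0) Φ)
    (hΦ0 : Φ 0 = 0)
    (hΦ'nn : ∀ x ∈ Ici (0:ℝ), 0 ≤ Φ' x)
    (hint : IntegrableOn (fun h => Φ' h * (volume (C h)).toReal) (Ioi 0)) :
    (∫ x : ℝ, Φ ((volume {h : ℝ | 0 ≤ h ∧ x ∈ Ct h}).toReal)) ≤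
      ∫ x : ℝ, Φ ((volume {h : ℝ | 0 ≤ h ∧ x ∈ C h}).toReal) := by
  have hΦ'_mono : MonotoneOn Φ' (Ici 0) := hΦconv.monotoneOn_of_hasDerivWithinAt hΦdiff
  have hΦ_cont : ContinuousOn Φ (Ici 0) := fun x hx => (hΦdiff x hx).continuousWithinAt
  have hΦ_nonneg : ∀ t ∈ Ici (0 : ℝ), 0 ≤ Φ t := fun t ht =>
    hΦ0 ▸ monotoneOn_of_hasDerivWithinAt_nonneg (convex_Ici 0) hΦ_cont
      (by simpa using fun x hx => (hΦdiff x (le_of_lt hx)).mono Ioi_subset_Ici_self)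
      (by simpa using fun x hx => hΦ'nn x (le_of_lt hx)) self_mem_Ici ht ht
  -- `Φ'` is extended constantly to the left of `0` so that the weight is monotone on all of `ℝ`.
  set F : ℝ → ℝ≥0∞ := fun h => ENNReal.ofReal (Φ' (max h 0))
  have hF : Monotone F := fun a b hab => ENNReal.ofReal_le_ofReal <|
    hΦ'_mono (le_max_right a 0) (le_max_right b 0) (max_le_max_right 0 hab)
  have hΦ_eq : ∀ t ∈ Ici (0 : ℝ), ENNReal.ofReal (Φ t) = ∫⁻ h in Icc 0 t, F h := by
    intro t ht
    have hFTC := ofReal_sub_eq_setLIntegral_Icc_of_hasDerivWithinAt ht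
      (fun x hx => (hΦdiff x hx.1).mono Icc_subset_Ici_self)
      ((hΦ'_mono.mono Icc_subset_Ici_self).integrableOn_isCompact isCompact_Icc)
      (fun x hx => hΦ'nn x hx.1)
    rw [hΦ0, sub_zero] at hFTC
    rw [hFTC]
    exact setLIntegral_congr_fun measurableSet_Icc fun h hh => by simp [F, max_eq_left hh.1]
  have h_energy (D : ℝ → Set ℝ) (hD : MeasurableSet {p : ℝ × ℝ | 0 ≤ p.2 ∧ p.1 ∈ D p.2}) :=
    integral_comp_eq_toReal_lintegral (μ := volume)
      (ρ := fun x => (volume {h : ℝ | 0 ≤ h ∧ x ∈ D h}).toReal) hΦ_cont hΦ_nonneg hΦ_eq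
      (measurable_measure_prodMk_left (ν := volume) hD).ennreal_toReal
      fun _ => ENNReal.toReal_nonneg
  have h_fin : ∫⁻ h in Ici 0, F h * volume (C h) ≠ ⊤ := by
    rw [← setLIntegral_congr Ioi_ae_eq_Ici]
    refine ((setLIntegral_congr_fun measurableSet_Ioi fun h hh => ?_).trans_lt
      hint.lintegral_lt_top).ne
    rw [ENNReal.ofReal_mul (hΦ'nn h (Ioi_subset_Ici_self hh)), ENNReal.ofReal_toReal (hfin h).ne]
    simp only [F, max_eq_left (le_of_lt (mem_Ioi.1 hh))]
  rw [h_energy Ct hmeas', h_energy C hmeas,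
    lintegral_setLIntegral_Icc_volume_section_eq hadm hmeas hρfin hF.measurable]
  refine ENNReal.toReal_mono h_fin
    ((lintegral_setLIntegral_Icc_volume_section_le hmeas' hF).trans_eq ?_)
  exact setLIntegral_congr_fun measurableSet_Ici fun h hh => by rw [hsame h hh]

/-- Corollary 4.3: a level-set rearrangement preserving the measure of every level
set does not increase the internal energy. -/
theorem stmt_7 (C Ct : ℝ → Set ℝ)
    (hadm : ∀ h₁ h₂ : ℝ, 0 ≤ h₁ → h₁ ≤ h₂ → C h₂ ⊆ C h₁)
    (hmeas : MeasurableSet {p : ℝ × ℝ | 0 ≤ p.2 ∧ p.1 ∈ C p.2})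
    (hfin : ∀ h : ℝ, volume (C h) < ⊤)
    (hρfin : ∀ᵐ x : ℝ, volume {h : ℝ | 0 ≤ h ∧ x ∈ C h} ≠ ⊤)
    (hmeas' : MeasurableSet {p : ℝ × ℝ | 0 ≤ p.2 ∧ p.1 ∈ Ct p.2})
    (hρfin' : ∀ᵐ x : ℝ, volume {h : ℝ | 0 ≤ h ∧ x ∈ Ct h} ≠ ⊤)
    (hsame : ∀ h : ℝ, 0 ≤ h → volume (Ct h) = volume (C h))
    (Φ Φ' : ℝ → ℝ)
    (hΦdiff : ∀ x ∈ Ici (0:ℝ), HasDerivWithinAt Φ (Φ' x) (Ici 0) x)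
    (hΦconv : ConvexOn ℝ (Ici 0) Φ)
    (hΦ0 : Φ 0 = 0)
    (hΦ'nn : ∀ x ∈ Ici (0:ℝ), 0 ≤ Φ' x)
    (hint : IntegrableOn (fun h => Φ' h * (volume (C h)).toReal) (Ioi 0)) :
    (∫ x : ℝ, Φ ((volume {h : ℝ | 0 ≤ h ∧ x ∈ Ct h}).toReal)) ≤
      ∫ x : ℝ, Φ ((volume {h : ℝ | 0 ≤ h ∧ x ∈ C h}).toReal) :=
  stmt_7_general C Ct hadm hmeas hfin hρfin hmeas' hsame Φ Φ' hΦdiff hΦconv hΦ0 hΦ'nn hint
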